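/- Every matrix in SL_2(ℝ) can be written uniquely as a product K·A·N where K is a rotation matrix [[cos s, sin s],[-sin s, cos s]], A is a diagonal matrix [[exp t, 0],[0, exp(-t)]], and N is a unipotent upper triangular matrix [[1, u],[0, 1]], for some real numbers s, t, u. -/

import Mathlib

noncomputable def rotMat (s : ℝ) : Matrix (Fin 2) (Fin 2) ℝ :=
  !![Real.cos s, Real.sin s; -Real.sin s, Real.cos s]

noncomputable def diagMat (t : ℝ) : Matrix (Fin 2) (Fin 2) ℝ :=
  !![Real.exp t, 0; 0, Real.exp (-t)]

def unipMat (u : ℝ) : Matrix (Fin 2) (Fin 2) ℝ :=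
  !![1, u; 0, 1]

/-!
The first column of `rotMat s * diagMat t * unipMat u` is `exp t • (cos s, -sin s)`, so
`t` and the rotation are the polar coordinates of the first column of `g`, which is nonzero
since `det g = 1`. Stripping `rotMat s * diagMat t` off `g` leaves a determinant-one matrix
with first column `(1, 0)`, and such a matrix is `unipMat u` for a unique `u`.
-/

open Real

lemma rotMat_add (s s' : ℝ) : rotMat (s + s') = rotMat s * rotMat s' := by
  ext i j
  fin_cases i <;> fin_cases j <;> simp [rotMat, cos_add, sin_add] <;> ring

lemma rotMat_zero : rotMat 0 = 1 := by
  simp [rotMat, Matrix.one_fin_two]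

lemma diagMat_add (t t' : ℝ) : diagMat (t + t') = diagMat t * diagMat t' := by
  ext i j
  fin_cases i <;> fin_cases j <;> simp [diagMat, exp_add, mul_comm]

lemma diagMat_zero : diagMat 0 = 1 := by
  simp [diagMat, Matrix.one_fin_two]

lemma rotMat_mul_diagMat_mul_inv (s t : ℝ) :
    rotMat s * diagMat t * (diagMat (-t) * rotMat (-s)) = 1 := by
  rw [mul_assoc, ← mul_assoc (diagMat t), ← diagMat_add, add_neg_cancel, diagMat_zero, one_mul,
    ← rotMat_add, add_neg_cancel, rotMat_zero]

lemma rotMat_mul_diagMat_inv_mul (s t : ℝ) :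
    diagMat (-t) * rotMat (-s) * (rotMat s * diagMat t) = 1 := by
  rw [mul_assoc, ← mul_assoc (rotMat (-s)), ← rotMat_add, neg_add_cancel, rotMat_zero, one_mul,
    ← diagMat_add, neg_add_cancel, diagMat_zero]

lemma rotMat_mul_diagMat_mul_left_cancel {s t : ℝ} {M M' : Matrix (Fin 2) (Fin 2) ℝ}
    (h : rotMat s * diagMat t * M = rotMat s * diagMat t * M') : M = M' :=
  calc M = diagMat (-t) * rotMat (-s) * (rotMat s * diagMat t) * M := by
        rw [rotMat_mul_diagMat_inv_mul, one_mul]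
    _ = diagMat (-t) * rotMat (-s) * (rotMat s * diagMat t) * M' := by
        rw [mul_assoc, h, ← mul_assoc]
    _ = M' := by rw [rotMat_mul_diagMat_inv_mul, one_mul]

lemma det_rotMat (s : ℝ) : (rotMat s).det = 1 := by
  simp [rotMat, Matrix.det_fin_two_of, ← sq]

lemma det_diagMat (t : ℝ) : (diagMat t).det = 1 := by
  simp [diagMat, Matrix.det_fin_two_of, ← exp_add]

lemma unipMat_injective : Function.Injective unipMat := fun u u' h => by
  simpa [unipMat] using congrFun (congrFun h 0) 1

lemma eq_unipMat_of_det_eq_one {M : Matrix (Fin 2) (Fin 2) ℝ} (h₀₀ : M 0 0 = 1)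
    (h₁₀ : M 1 0 = 0) (hM : M.det = 1) : M = unipMat (M 0 1) := by
  have h₁₁ : M 1 1 = 1 := by simpa [Matrix.det_fin_two, h₀₀, h₁₀] using hM
  rw [Matrix.eta_fin_two M, h₀₀, h₁₀, h₁₁]
  simp [unipMat]

lemma rotMat_mul_diagMat_mul_unipMat_apply_zero_zero (s t u : ℝ) :
    (rotMat s * diagMat t * unipMat u) 0 0 = exp t * cos s := by
  simp [rotMat, diagMat, unipMat, mul_comm]

lemma rotMat_mul_diagMat_mul_unipMat_apply_one_zero (s t u : ℝ) :
    (rotMat s * diagMat t * unipMat u) 1 0 = -(exp t * sin s) := by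
  simp [rotMat, diagMat, unipMat, mul_comm]

lemma diagMat_neg_mul_rotMat_neg_mul_apply_zero {g : Matrix (Fin 2) (Fin 2) ℝ} {s t : ℝ}
    (h₀₀ : g 0 0 = exp t * cos s) (h₁₀ : g 1 0 = -(exp t * sin s)) :
    (diagMat (-t) * rotMat (-s) * g) 0 0 = 1 ∧ (diagMat (-t) * rotMat (-s) * g) 1 0 = 0 := by
  simp [mul_assoc, rotMat, diagMat, Matrix.vecMul, dotProduct, Fin.sum_univ_two, h₀₀, h₁₀,
    exp_neg]
  constructor
  · field_simp
    linear_combination sin_sq_add_cos_sq s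
  · ring

lemma exists_exp_mul_cos_sin {a b : ℝ} (h : a ≠ 0 ∨ b ≠ 0) :
    ∃ t s : ℝ, a = exp t * cos s ∧ b = exp t * sin s := by
  set z : ℂ := ⟨a, b⟩
  have hz : z ≠ 0 := by
    contrapose! h
    exact ⟨congrArg Complex.re h, congrArg Complex.im h⟩
  refine ⟨log ‖z‖, z.arg, ?_, ?_⟩ <;> rw [exp_log (norm_pos_iff.mpr hz)]
  · exact (Complex.norm_mul_cos_arg z).symm
  · exact (Complex.norm_mul_sin_arg z).symm

lemma eq_of_exp_mul_cos_sin_eq {t s t' s' : ℝ} (hc : exp t * cos s = exp t' * cos s')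
    (hs : exp t * sin s = exp t' * sin s') : t = t' ∧ cos s = cos s' ∧ sin s = sin s' := by
  have hsq : exp t ^ 2 = exp t' ^ 2 := by
    linear_combination (exp t * cos s + exp t' * cos s') * hc
      + (exp t * sin s + exp t' * sin s') * hs
      - exp t ^ 2 * sin_sq_add_cos_sq s + exp t' ^ 2 * sin_sq_add_cos_sq s'
  have ht : t = t' :=
    exp_injective ((pow_left_inj₀ (exp_pos t).le (exp_pos t').le two_ne_zero).mp hsq)
  subst ht
  exact ⟨rfl, mul_left_cancel₀ (exp_ne_zero t) hc, mul_left_cancel₀ (exp_ne_zero t) hs⟩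

theorem sl2_iwasawa_decomposition (g : Matrix (Fin 2) (Fin 2) ℝ) (hg : g.det = 1) :
    (∃ s t u : ℝ, g = rotMat s * diagMat t * unipMat u) ∧
    (∀ s t u s' t' u' : ℝ,
      rotMat s * diagMat t * unipMat u = rotMat s' * diagMat t' * unipMat u' →
      t = t' ∧ u = u' ∧ rotMat s = rotMat s') := by
  constructor
  · have hcol : g 0 0 ≠ 0 ∨ -g 1 0 ≠ 0 := by
      by_contra! h
      simp [Matrix.det_fin_two, h.1, neg_eq_zero.mp h.2] at hg
    obtain ⟨t, s, h₀₀, h₁₀⟩ := exists_exp_mul_cos_sin hcol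
    rw [neg_eq_iff_eq_neg] at h₁₀
    set M := diagMat (-t) * rotMat (-s) * g
    obtain ⟨hM₀₀, hM₁₀⟩ := diagMat_neg_mul_rotMat_neg_mul_apply_zero h₀₀ h₁₀
    have hM : M = unipMat (M 0 1) :=
      eq_unipMat_of_det_eq_one hM₀₀ hM₁₀ (by simp [M, det_rotMat, det_diagMat, hg])
    refine ⟨s, t, M 0 1, ?_⟩
    rw [← hM, ← mul_assoc, rotMat_mul_diagMat_mul_inv, one_mul]
  · intro s t u s' t' u' h
    have h₀₀ := congrFun (congrFun h 0) 0
    have h₁₀ := congrFun (congrFun h 1) 0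
    simp only [rotMat_mul_diagMat_mul_unipMat_apply_zero_zero,
      rotMat_mul_diagMat_mul_unipMat_apply_one_zero, neg_inj] at h₀₀ h₁₀
    obtain ⟨rfl, hcos, hsin⟩ := eq_of_exp_mul_cos_sin_eq h₀₀ h₁₀
    have hrot : rotMat s = rotMat s' := by simp only [rotMat, hcos, hsin]
    rw [← hrot] at h
    exact ⟨rfl, unipMat_injective (rotMat_mul_diagMat_mul_left_cancel h), hrot⟩
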